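/- Let Γ ∈ M_n(ℂ) be invertible, α, β ∈ ℝ with α ≠ 0, C ∈ ℂ, and set Γ̃ := Γ + i·β·I and N := (1/4)·Γ̃² − |C|²·I. Suppose N is nilpotent with N^{N₀} = 0 for some integer N₀ ≥ 1. Define, for a square matrix M and t ∈ ℝ, R₁(M,t) := Σ_{k=0}^{N₀−1} (t^{2k}/(2k)!)·M^k and R₂(M,t) := Σ_{k=0}^{N₀−1} (t^{2k+1}/(2k+1)!)·M^k. For constant vectors v, w ∈ ℂⁿ define η̃₁(x,t) := ( R₁(N,t)·R₁(−α²Γ⁻²N, x) − i·α·Γ⁻¹·N·R₂(N,t)·R₂(−α²Γ⁻²N, x) )·v + ( R₁(N,t)·R₂(−α²Γ⁻²N, x) + (i/α)·Γ·R₂(N,t)·R₁(−α²Γ⁻²N, x) )·w. Then η̃₁ satisfies ∂_t∂_t η̃₁ − N·η̃₁ = 0 and i·α·∂_t η̃₁ + Γ·∂_x η̃₁ = 0 at every point (x,t) ∈ ℝ². -/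

import Mathlib

open Matrix

/-- Entrywise partial x-derivative of a matrix-valued function on ℝ × ℝ. -/
noncomputable def pdxM {m k : ℕ} (M : ℝ × ℝ → Matrix (Fin m) (Fin k) ℂ)
    (p : ℝ × ℝ) : Matrix (Fin m) (Fin k) ℂ :=
  Matrix.of fun i j => fderiv ℝ (fun q => M q i j) p (1, 0)

/-- Entrywise partial t-derivative of a matrix-valued function on ℝ × ℝ. -/
noncomputable def pdtM {m k : ℕ} (M : ℝ × ℝ → Matrix (Fin m) (Fin k) ℂ)
    (p : ℝ × ℝ) : Matrix (Fin m) (Fin k) ℂ :=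
  Matrix.of fun i j => fderiv ℝ (fun q => M q i j) p (0, 1)

/-- A vector of ℂⁿ viewed as an n×1 column matrix. -/
def colV {n : ℕ} (η : Fin n → ℂ) : Matrix (Fin n) (Fin 1) ℂ :=
  Matrix.of fun i _ => η i

/-- R₁(M,t) = Σ_{k=0}^{N₀−1} (t^{2k}/(2k)!)·Mᵏ. -/
noncomputable def R₁ {n : ℕ} (N₀ : ℕ) (M : Matrix (Fin n) (Fin n) ℂ) (t : ℝ) :
    Matrix (Fin n) (Fin n) ℂ :=
  ∑ k ∈ Finset.range N₀, ((t^(2*k) / (2*k).factorial : ℝ) : ℂ) • M^k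

/-- R₂(M,t) = Σ_{k=0}^{N₀−1} (t^{2k+1}/(2k+1)!)·Mᵏ. -/
noncomputable def R₂ {n : ℕ} (N₀ : ℕ) (M : Matrix (Fin n) (Fin n) ℂ) (t : ℝ) :
    Matrix (Fin n) (Fin n) ℂ :=
  ∑ k ∈ Finset.range N₀, ((t^(2*k+1) / (2*k+1).factorial : ℝ) : ℂ) • M^k

/- ==================== auxiliary lemmas ==================== -/

lemma entry_sep {f g : ℝ → ℂ} {f' g' : ℂ} {p : ℝ × ℝ}
    (hf : HasDerivAt f f' p.2) (hg : HasDerivAt g g' p.1) :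
    HasFDerivAt (fun q : ℝ × ℝ => f q.2 * g q.1)
      (f p.2 • ((ContinuousLinearMap.smulRight (1 : ℝ →L[ℝ] ℝ) g').comp
          (ContinuousLinearMap.fst ℝ ℝ ℝ))
        + g p.1 • ((ContinuousLinearMap.smulRight (1 : ℝ →L[ℝ] ℝ) f').comp
          (ContinuousLinearMap.snd ℝ ℝ ℝ))) p :=
  (hf.hasFDerivAt.comp p hasFDerivAt_snd).mul (hg.hasFDerivAt.comp p hasFDerivAt_fst)

lemma pd_pair {n : ℕ} (A C : ℝ → Matrix (Fin n) (Fin n) ℂ) (U V : ℝ → Matrix (Fin n) (Fin 1) ℂ)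
    (A' C' : Matrix (Fin n) (Fin n) ℂ) (U' V' : Matrix (Fin n) (Fin 1) ℂ) (p : ℝ × ℝ)
    (F : ℝ × ℝ → Matrix (Fin n) (Fin 1) ℂ)
    (hF : F = fun q => A q.2 * U q.1 + C q.2 * V q.1)
    (hA : ∀ i j, HasDerivAt (fun s => A s i j) (A' i j) p.2)
    (hC : ∀ i j, HasDerivAt (fun s => C s i j) (C' i j) p.2)
    (hU : ∀ i j, HasDerivAt (fun s => U s i j) (U' i j) p.1)
    (hV : ∀ i j, HasDerivAt (fun s => V s i j) (V' i j) p.1) :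
    pdtM F p = A' * U p.1 + C' * V p.1 ∧
    pdxM F p = A p.2 * U' + C p.2 * V' := by
  subst hF
  have key : ∀ i j, HasFDerivAt (fun q : ℝ × ℝ => (A q.2 * U q.1 + C q.2 * V q.1) i j)
      ((∑ m, (A p.2 i m • ((ContinuousLinearMap.smulRight (1 : ℝ →L[ℝ] ℝ) (U' m j)).comp
          (ContinuousLinearMap.fst ℝ ℝ ℝ))
        + U p.1 m j • ((ContinuousLinearMap.smulRight (1 : ℝ →L[ℝ] ℝ) (A' i m)).comp
          (ContinuousLinearMap.snd ℝ ℝ ℝ))))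
       + ∑ m, (C p.2 i m • ((ContinuousLinearMap.smulRight (1 : ℝ →L[ℝ] ℝ) (V' m j)).comp
          (ContinuousLinearMap.fst ℝ ℝ ℝ))
        + V p.1 m j • ((ContinuousLinearMap.smulRight (1 : ℝ →L[ℝ] ℝ) (C' i m)).comp
          (ContinuousLinearMap.snd ℝ ℝ ℝ)))) p := by
    intro i j
    have h1 : ∀ m ∈ Finset.univ, HasFDerivAt (fun q : ℝ × ℝ => A q.2 i m * U q.1 m j)
        ((A p.2 i m • ((ContinuousLinearMap.smulRight (1 : ℝ →L[ℝ] ℝ) (U' m j)).comp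
            (ContinuousLinearMap.fst ℝ ℝ ℝ))
          + U p.1 m j • ((ContinuousLinearMap.smulRight (1 : ℝ →L[ℝ] ℝ) (A' i m)).comp
            (ContinuousLinearMap.snd ℝ ℝ ℝ)))) p :=
      fun m _ => entry_sep (hA i m) (hU m j)
    have h2 : ∀ m ∈ Finset.univ, HasFDerivAt (fun q : ℝ × ℝ => C q.2 i m * V q.1 m j)
        ((C p.2 i m • ((ContinuousLinearMap.smulRight (1 : ℝ →L[ℝ] ℝ) (V' m j)).comp
            (ContinuousLinearMap.fst ℝ ℝ ℝ))
          + V p.1 m j • ((ContinuousLinearMap.smulRight (1 : ℝ →L[ℝ] ℝ) (C' i m)).comp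
            (ContinuousLinearMap.snd ℝ ℝ ℝ)))) p :=
      fun m _ => entry_sep (hC i m) (hV m j)
    have := (HasFDerivAt.fun_sum h1).fun_add (HasFDerivAt.fun_sum h2)
    simpa [Matrix.add_apply, Matrix.mul_apply] using this
  constructor
  · funext i j
    simp only [pdtM, Matrix.of_apply]
    rw [(key i j).fderiv]
    simp [Matrix.add_apply, Matrix.mul_apply, mul_comm]
  · funext i j
    simp only [pdxM, Matrix.of_apply]
    rw [(key i j).fderiv]
    simp [Matrix.add_apply, Matrix.mul_apply, mul_comm]

lemma coeff₂ (k : ℕ) (t : ℝ) :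
    ((2*k+1 : ℕ) : ℝ) * t^(2*k+1-1) / ((2*k+1).factorial : ℝ)
      = t^(2*k) / ((2*k).factorial : ℝ) := by
  rw [Nat.succ_sub_one, Nat.factorial_succ]
  have h1 : ((2*k).factorial : ℝ) ≠ 0 := Nat.cast_ne_zero.mpr (2*k).factorial_ne_zero
  have h2 : ((2*k+1 : ℕ) : ℝ) ≠ 0 := by positivity
  push_cast
  field_simp

lemma coeff₁ (k : ℕ) (t : ℝ) :
    ((2*(k+1) : ℕ) : ℝ) * t^(2*(k+1)-1) / ((2*(k+1)).factorial : ℝ)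
      = t^(2*k+1) / ((2*k+1).factorial : ℝ) := by
  have h1 : 2*(k+1) = (2*k+1)+1 := by ring
  rw [h1, Nat.succ_sub_one, Nat.factorial_succ]
  have h2 : ((2*k+1).factorial : ℝ) ≠ 0 := Nat.cast_ne_zero.mpr (2*k+1).factorial_ne_zero
  have h3 : ((2*k+1+1 : ℕ) : ℝ) ≠ 0 := by positivity
  push_cast
  field_simp

lemma R₂_hasDerivAt {n : ℕ} (N₀ : ℕ) (M : Matrix (Fin n) (Fin n) ℂ) (t : ℝ)
    (i j : Fin n) :
    HasDerivAt (fun s => R₂ N₀ M s i j) ((R₁ N₀ M t) i j) t := by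
  have h : ∀ k ∈ Finset.range N₀,
      HasDerivAt (fun s : ℝ => ((s^(2*k+1) / (2*k+1).factorial : ℝ) : ℂ) * (M^k) i j)
        (((t^(2*k) / (2*k).factorial : ℝ) : ℂ) * (M^k) i j) t := by
    intro k _
    have hr : HasDerivAt (fun s : ℝ => s^(2*k+1) / (2*k+1).factorial)
        (t^(2*k) / (2*k).factorial) t := by
      have := (hasDerivAt_pow (2*k+1) t).div_const ((2*k+1).factorial : ℝ)
      rwa [coeff₂] at this
    exact (hr.ofReal_comp).mul_const _
  have hs := HasDerivAt.fun_sum h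
  have e1 : (fun s : ℝ => R₂ N₀ M s i j)
      = fun s : ℝ => ∑ k ∈ Finset.range N₀,
          ((s^(2*k+1) / (2*k+1).factorial : ℝ) : ℂ) * (M^k) i j := by
    funext s; simp [R₂, Matrix.sum_apply, Matrix.smul_apply, smul_eq_mul]
  have e2 : (R₁ N₀ M t) i j = ∑ k ∈ Finset.range N₀,
      ((t^(2*k) / (2*k).factorial : ℝ) : ℂ) * (M^k) i j := by
    simp [R₁, Matrix.sum_apply, Matrix.smul_apply, smul_eq_mul]
  rw [e1, e2]; exact hs

lemma R₁_hasDerivAt {n : ℕ} (N₀ : ℕ) (hN₀ : 1 ≤ N₀) (M : Matrix (Fin n) (Fin n) ℂ)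
    (hnil : M ^ N₀ = 0) (t : ℝ) (i j : Fin n) :
    HasDerivAt (fun s => R₁ N₀ M s i j) ((M * R₂ N₀ M t) i j) t := by
  have h : ∀ k ∈ Finset.range N₀,
      HasDerivAt (fun s : ℝ => ((s^(2*k) / (2*k).factorial : ℝ) : ℂ) * (M^k) i j)
        (((((2*k : ℕ) : ℝ) * t^(2*k-1) / (2*k).factorial : ℝ) : ℂ) * (M^k) i j) t := by
    intro k _
    exact (((hasDerivAt_pow (2*k) t).div_const ((2*k).factorial : ℝ)).ofReal_comp).mul_const _
  have hs := HasDerivAt.fun_sum h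
  have hmat : ∑ k ∈ Finset.range N₀,
      ((((2*k : ℕ) : ℝ) * t^(2*k-1) / (2*k).factorial : ℝ) : ℂ) • M^k
      = M * R₂ N₀ M t := by
    obtain ⟨m, rfl⟩ : ∃ m, N₀ = m + 1 := ⟨N₀ - 1, (Nat.succ_pred_eq_of_pos hN₀).symm⟩
    rw [Finset.sum_range_succ', R₂, Finset.mul_sum, Finset.sum_range_succ]
    have hlast : M * (((t ^ (2*m+1) / ((2*m+1).factorial : ℝ) : ℝ) : ℂ) • M ^ m) = 0 := by
      rw [Matrix.mul_smul, ← pow_succ', hnil, smul_zero]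
    rw [hlast, add_zero]
    have h0 : ((((2*0 : ℕ) : ℝ) * t^(2*0-1) / (2*0).factorial : ℝ) : ℂ) • M^0 = 0 := by
      norm_num
    rw [h0, add_zero]
    apply Finset.sum_congr rfl
    intro k _
    rw [Matrix.mul_smul, ← pow_succ']
    congr 1
    rw [coeff₁]
  have e1 : (fun s : ℝ => R₁ N₀ M s i j)
      = fun s : ℝ => ∑ k ∈ Finset.range N₀,
          ((s^(2*k) / (2*k).factorial : ℝ) : ℂ) * (M^k) i j := by
    funext s; simp [R₁, Matrix.sum_apply, Matrix.smul_apply, smul_eq_mul]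
  have e2 : (M * R₂ N₀ M t) i j = ∑ k ∈ Finset.range N₀,
      ((((2*k : ℕ) : ℝ) * t^(2*k-1) / (2*k).factorial : ℝ) : ℂ) * (M^k) i j := by
    rw [← hmat]; simp [Matrix.sum_apply, Matrix.smul_apply, smul_eq_mul]
  rw [e1, e2]; exact hs

lemma matD_mul_right {k l m : ℕ} {A : ℝ → Matrix (Fin k) (Fin l) ℂ}
    {A' : Matrix (Fin k) (Fin l) ℂ} {t : ℝ}
    (h : ∀ i j, HasDerivAt (fun s => A s i j) (A' i j) t)
    (K : Matrix (Fin l) (Fin m) ℂ) (i : Fin k) (j : Fin m) :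
    HasDerivAt (fun s => (A s * K) i j) ((A' * K) i j) t := by
  have h1 : ∀ p ∈ Finset.univ, HasDerivAt (fun s => A s i p * K p j) (A' i p * K p j) t :=
    fun p _ => (h i p).mul_const _
  have := HasDerivAt.fun_sum h1
  simpa [Matrix.mul_apply] using this

lemma matD_const_mul {k l m : ℕ} {A : ℝ → Matrix (Fin l) (Fin m) ℂ}
    {A' : Matrix (Fin l) (Fin m) ℂ} {t : ℝ}
    (h : ∀ i j, HasDerivAt (fun s => A s i j) (A' i j) t)
    (K : Matrix (Fin k) (Fin l) ℂ) (i : Fin k) (j : Fin m) :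
    HasDerivAt (fun s => (K * A s) i j) ((K * A') i j) t := by
  have h1 : ∀ p ∈ Finset.univ, HasDerivAt (fun s => K i p * A s p j) (K i p * A' p j) t :=
    fun p _ => (h p j).const_mul _
  have := HasDerivAt.fun_sum h1
  simpa [Matrix.mul_apply] using this

lemma matD_smul {k l : ℕ} {A : ℝ → Matrix (Fin k) (Fin l) ℂ}
    {A' : Matrix (Fin k) (Fin l) ℂ} {t : ℝ}
    (h : ∀ i j, HasDerivAt (fun s => A s i j) (A' i j) t)
    (c : ℂ) (i : Fin k) (j : Fin l) :
    HasDerivAt (fun s => (c • A s) i j) ((c • A') i j) t := by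
  simpa [Matrix.smul_apply, smul_eq_mul] using (h i j).const_mul c

lemma matD_add {k l : ℕ} {A B : ℝ → Matrix (Fin k) (Fin l) ℂ}
    {A' B' : Matrix (Fin k) (Fin l) ℂ} {t : ℝ}
    (hA : ∀ i j, HasDerivAt (fun s => A s i j) (A' i j) t)
    (hB : ∀ i j, HasDerivAt (fun s => B s i j) (B' i j) t)
    (i : Fin k) (j : Fin l) :
    HasDerivAt (fun s => (A s + B s) i j) ((A' + B') i j) t := by
  exact (hA i j).add (hB i j)

/- ==================== main theorem ==================== -/

set_option maxHeartbeats 1000000 in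
theorem stmt_16 {n : ℕ} (Γ : Matrix (Fin n) (Fin n) ℂ) (hΓ : IsUnit Γ)
    (α β : ℝ) (hα : α ≠ 0) (C : ℂ)
    (Γt N : Matrix (Fin n) (Fin n) ℂ)
    (hΓt : Γt = Γ + (Complex.I * (β : ℂ)) • (1 : Matrix (Fin n) (Fin n) ℂ))
    (hN : N = ((1 : ℂ)/4) • (Γt * Γt)
        - ((Complex.normSq C : ℝ) : ℂ) • (1 : Matrix (Fin n) (Fin n) ℂ))
    (N₀ : ℕ) (hN₀ : 1 ≤ N₀) (hnil : N ^ N₀ = 0)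
    (v w : Fin n → ℂ)
    (ηt₁ : ℝ × ℝ → Matrix (Fin n) (Fin 1) ℂ)
    (hηt₁ : ηt₁ = fun p =>
      (R₁ N₀ N p.2 * R₁ N₀ (-((α : ℂ)^2) • (Γ⁻¹ * Γ⁻¹ * N)) p.1
          - (Complex.I * (α : ℂ)) •
            (Γ⁻¹ * N * R₂ N₀ N p.2 * R₂ N₀ (-((α : ℂ)^2) • (Γ⁻¹ * Γ⁻¹ * N)) p.1))
        * colV v
      + (R₁ N₀ N p.2 * R₂ N₀ (-((α : ℂ)^2) • (Γ⁻¹ * Γ⁻¹ * N)) p.1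
          + (Complex.I / (α : ℂ)) •
            (Γ * R₂ N₀ N p.2 * R₁ N₀ (-((α : ℂ)^2) • (Γ⁻¹ * Γ⁻¹ * N)) p.1))
        * colV w) :
    (∀ p, pdtM (fun q => pdtM ηt₁ q) p - N * ηt₁ p = 0) ∧
    (∀ p, (Complex.I * (α : ℂ)) • pdtM ηt₁ p + Γ * pdxM ηt₁ p = 0) := by
  set c : ℂ := Complex.I * (α : ℂ) with hc
  set d : ℂ := Complex.I / (α : ℂ) with hd
  set P : Matrix (Fin n) (Fin n) ℂ := -((α : ℂ)^2) • (Γ⁻¹ * Γ⁻¹ * N) with hPdef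
  -- basic facts
  have hdet : IsUnit Γ.det := (Matrix.isUnit_iff_isUnit_det Γ).mp hΓ
  have hΓΓi : Γ * Γ⁻¹ = 1 := Matrix.mul_nonsing_inv Γ hdet
  have hΓiΓ : Γ⁻¹ * Γ = 1 := Matrix.nonsing_inv_mul Γ hdet
  have hcΓΓt : Commute Γ Γt := by
    rw [hΓt]; exact (Commute.refl Γ).add_right ((Commute.one_right Γ).smul_right _)
  have hcΓN : Commute Γ N := by
    rw [hN]; exact ((hcΓΓt.mul_right hcΓΓt).smul_right _).sub_right
      ((Commute.one_right Γ).smul_right _)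
  have hcΓiN : Commute Γ⁻¹ N := by
    have h1 : Γ⁻¹ * (N * Γ) * Γ⁻¹ = Γ⁻¹ * (Γ * N) * Γ⁻¹ := by rw [← hcΓN.eq]
    have h2 : Γ⁻¹ * (N * Γ) * Γ⁻¹ = Γ⁻¹ * N := by
      rw [Matrix.mul_assoc Γ⁻¹ (N * Γ) Γ⁻¹, Matrix.mul_assoc N Γ Γ⁻¹, hΓΓi, Matrix.mul_one]
    have h3 : Γ⁻¹ * (Γ * N) * Γ⁻¹ = N * Γ⁻¹ := by
      rw [← Matrix.mul_assoc Γ⁻¹ Γ N, hΓiΓ, Matrix.one_mul]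
    exact h2.symm.trans (h1.trans h3)
  have hcNP : Commute N P := by
    exact (((hcΓiN.symm.mul_right hcΓiN.symm).mul_right (Commute.refl N)).smul_right _)
  have hPnil : P ^ N₀ = 0 := by
    rw [hPdef, smul_pow, ((hcΓiN.mul_left hcΓiN).mul_pow N₀ : (Γ⁻¹ * Γ⁻¹ * N) ^ N₀ = _),
      hnil, mul_zero, smul_zero]
  -- commutation with the R-matrices
  have hRc : ∀ (X M : Matrix (Fin n) (Fin n) ℂ), Commute X M → ∀ t,
      Commute X (R₁ N₀ M t) ∧ Commute X (R₂ N₀ M t) := by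
    intro X M h t
    refine ⟨Commute.sum_right _ _ _ fun k _ => (h.pow_right k).smul_right _,
      Commute.sum_right _ _ _ fun k _ => (h.pow_right k).smul_right _⟩
  set U : ℝ → Matrix (Fin n) (Fin 1) ℂ :=
    fun x => R₁ N₀ P x * colV v + R₂ N₀ P x * colV w with hUdef
  set V : ℝ → Matrix (Fin n) (Fin 1) ℂ :=
    fun x => (-c) • (Γ⁻¹ * N * R₂ N₀ P x * colV v) + d • (Γ * R₁ N₀ P x * colV w) with hVdef
  have hsepη : ηt₁ = fun q => R₁ N₀ N q.2 * U q.1 + R₂ N₀ N q.2 * V q.1 := by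
    rw [hηt₁]
    funext q
    have e1 : Γ⁻¹ * N * R₂ N₀ N q.2 = R₂ N₀ N q.2 * (Γ⁻¹ * N) :=
      ((hRc (Γ⁻¹ * N) N (hcΓiN.mul_left (Commute.refl N)) q.2).2).eq
    have e2 : Γ * R₂ N₀ N q.2 = R₂ N₀ N q.2 * Γ := ((hRc Γ N hcΓN q.2).2).eq
    show _ = R₁ N₀ N q.2 * U q.1 + R₂ N₀ N q.2 * V q.1
    rw [e1, e2, hUdef, hVdef]
    simp only [Matrix.sub_mul, Matrix.add_mul, Matrix.smul_mul, Matrix.mul_add,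
      Matrix.mul_smul, smul_add, Matrix.mul_assoc, sub_eq_add_neg, neg_smul,
      Matrix.neg_mul, Matrix.mul_neg]
    abel
  -- entrywise derivative facts
  have hAd : ∀ (t : ℝ) (i j : Fin n),
      HasDerivAt (fun s => R₁ N₀ N s i j) ((N * R₂ N₀ N t) i j) t :=
    fun t => R₁_hasDerivAt N₀ hN₀ N hnil t
  have hBd : ∀ (t : ℝ) (i j : Fin n),
      HasDerivAt (fun s => R₂ N₀ N s i j) ((R₁ N₀ N t) i j) t :=
    fun t => R₂_hasDerivAt N₀ N t
  have hFd : ∀ (x : ℝ) (i j : Fin n),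
      HasDerivAt (fun s => R₁ N₀ P s i j) ((P * R₂ N₀ P x) i j) x :=
    fun x => R₁_hasDerivAt N₀ hN₀ P hPnil x
  have hGd : ∀ (x : ℝ) (i j : Fin n),
      HasDerivAt (fun s => R₂ N₀ P s i j) ((R₁ N₀ P x) i j) x :=
    fun x => R₂_hasDerivAt N₀ P x
  have hUd : ∀ (x : ℝ) (i : Fin n) (j : Fin 1), HasDerivAt (fun s => U s i j)
      ((P * R₂ N₀ P x * colV v + R₁ N₀ P x * colV w) i j) x := by
    intro x i j
    exact matD_add (fun i j => matD_mul_right (hFd x) (colV v) i j)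
      (fun i j => matD_mul_right (hGd x) (colV w) i j) i j
  have hVd : ∀ (x : ℝ) (i : Fin n) (j : Fin 1), HasDerivAt (fun s => V s i j)
      (((-c) • (Γ⁻¹ * N * R₁ N₀ P x * colV v)
        + d • (Γ * (P * R₂ N₀ P x) * colV w)) i j) x := by
    intro x i j
    exact matD_add
      (fun i j => matD_smul (fun i j => matD_mul_right
        (fun i j => matD_const_mul (hGd x) (Γ⁻¹ * N) i j) (colV v) i j) (-c) i j)
      (fun i j => matD_smul (fun i j => matD_mul_right
        (fun i j => matD_const_mul (hFd x) Γ i j) (colV w) i j) d i j) i j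
  have h1 : ∀ p : ℝ × ℝ,
      pdtM ηt₁ p = (N * R₂ N₀ N p.2) * U p.1 + R₁ N₀ N p.2 * V p.1 ∧
      pdxM ηt₁ p = R₁ N₀ N p.2 *
          (P * R₂ N₀ P p.1 * colV v + R₁ N₀ P p.1 * colV w)
        + R₂ N₀ N p.2 * ((-c) • (Γ⁻¹ * N * R₁ N₀ P p.1 * colV v)
            + d • (Γ * (P * R₂ N₀ P p.1) * colV w)) :=
    fun p => pd_pair (fun s => R₁ N₀ N s) (fun s => R₂ N₀ N s) U V
      (N * R₂ N₀ N p.2) (R₁ N₀ N p.2) _ _ p ηt₁ hsepη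
      (hAd p.2) (hBd p.2) (hUd p.1) (hVd p.1)
  have h2 : ∀ p : ℝ × ℝ,
      pdtM (fun q => pdtM ηt₁ q) p
        = (N * R₁ N₀ N p.2) * U p.1 + (N * R₂ N₀ N p.2) * V p.1 :=
    fun p => (pd_pair (fun s => N * R₂ N₀ N s) (fun s => R₁ N₀ N s) U V
      (N * R₁ N₀ N p.2) (N * R₂ N₀ N p.2)
      (P * R₂ N₀ P p.1 * colV v + R₁ N₀ P p.1 * colV w)
      ((-c) • (Γ⁻¹ * N * R₁ N₀ P p.1 * colV v) + d • (Γ * (P * R₂ N₀ P p.1) * colV w))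
      p (fun q => pdtM ηt₁ q) (funext fun q => (h1 q).1)
      (fun i j => matD_const_mul (hBd p.2) N i j)
      (hAd p.2) (hUd p.1) (hVd p.1)).1
  constructor
  · intro p
    rw [h2 p, hsepη]
    rw [sub_eq_zero]
    simp only [Matrix.mul_add, Matrix.mul_assoc]
  · intro p
    rw [(h1 p).1, (h1 p).2]
    have hαC : (α:ℂ) ≠ 0 := Complex.ofReal_ne_zero.mpr hα
    have hs1 : c * (-c) = (α:ℂ)^2 := by rw [hc]; ring_nf; simp [Complex.I_sq]
    have hs2 : c * d = -1 := by rw [hc, hd]; field_simp; ring_nf; simp [Complex.I_sq]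
    have hs3 : d * (-(α:ℂ)^2) = -c := by rw [hc, hd]; field_simp
    have hcΓAt : Γ * R₁ N₀ N p.2 = R₁ N₀ N p.2 * Γ := ((hRc Γ N hcΓN p.2).1).eq
    have hcΓBt : Γ * R₂ N₀ N p.2 = R₂ N₀ N p.2 * Γ := ((hRc Γ N hcΓN p.2).2).eq
    have hcNBt : N * R₂ N₀ N p.2 = R₂ N₀ N p.2 * N :=
      ((hRc N N (Commute.refl N) p.2).2).eq
    have hΓP : Γ * P = (-(α:ℂ)^2) • (Γ⁻¹ * N) := by
      rw [hPdef, Matrix.mul_smul, ← Matrix.mul_assoc Γ (Γ⁻¹ * Γ⁻¹) N,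
        ← Matrix.mul_assoc Γ Γ⁻¹ Γ⁻¹, hΓΓi, Matrix.one_mul]
    have hMv : c • (N * R₂ N₀ N p.2 * R₁ N₀ P p.1)
        + (c * (-c)) • (R₁ N₀ N p.2 * (Γ⁻¹ * N * R₂ N₀ P p.1))
        + Γ * R₁ N₀ N p.2 * (P * R₂ N₀ P p.1)
        + (-c) • (Γ * R₂ N₀ N p.2 * (Γ⁻¹ * N * R₁ N₀ P p.1)) = 0 := by
      have t3 : Γ * R₁ N₀ N p.2 * (P * R₂ N₀ P p.1)
          = (-(α:ℂ)^2) • (R₁ N₀ N p.2 * (Γ⁻¹ * N * R₂ N₀ P p.1)) := by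
        rw [hcΓAt, Matrix.mul_assoc (R₁ N₀ N p.2) Γ _,
          ← Matrix.mul_assoc Γ P (R₂ N₀ P p.1), hΓP, Matrix.smul_mul, Matrix.mul_smul]
      have t4 : Γ * R₂ N₀ N p.2 * (Γ⁻¹ * N * R₁ N₀ P p.1)
          = N * R₂ N₀ N p.2 * R₁ N₀ P p.1 := by
        rw [hcΓBt, Matrix.mul_assoc (R₂ N₀ N p.2) Γ _,
          ← Matrix.mul_assoc Γ (Γ⁻¹ * N) (R₁ N₀ P p.1),
          ← Matrix.mul_assoc Γ Γ⁻¹ N, hΓΓi, Matrix.one_mul,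
          ← Matrix.mul_assoc (R₂ N₀ N p.2) N (R₁ N₀ P p.1), ← hcNBt]
      rw [t3, t4, hs1]
      module
    have hMw : c • (N * R₂ N₀ N p.2 * R₂ N₀ P p.1)
        + (c * d) • (R₁ N₀ N p.2 * (Γ * R₁ N₀ P p.1))
        + Γ * R₁ N₀ N p.2 * R₁ N₀ P p.1
        + d • (Γ * R₂ N₀ N p.2 * (Γ * (P * R₂ N₀ P p.1))) = 0 := by
      have t3 : Γ * R₁ N₀ N p.2 * R₁ N₀ P p.1
          = R₁ N₀ N p.2 * (Γ * R₁ N₀ P p.1) := by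
        rw [hcΓAt, Matrix.mul_assoc]
      have t4 : Γ * R₂ N₀ N p.2 * (Γ * (P * R₂ N₀ P p.1))
          = (-(α:ℂ)^2) • (N * R₂ N₀ N p.2 * R₂ N₀ P p.1) := by
        rw [hcΓBt, Matrix.mul_assoc (R₂ N₀ N p.2) Γ _,
          ← Matrix.mul_assoc Γ P (R₂ N₀ P p.1), hΓP, Matrix.smul_mul, Matrix.mul_smul,
          Matrix.mul_smul, ← Matrix.mul_assoc Γ (Γ⁻¹ * N) (R₂ N₀ P p.1),
          ← Matrix.mul_assoc Γ Γ⁻¹ N, hΓΓi, Matrix.one_mul,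
          ← Matrix.mul_assoc (R₂ N₀ N p.2) N (R₂ N₀ P p.1), ← hcNBt]
      rw [t3, t4, hs2, smul_smul, hs3]
      module
    have final : (c • (N * R₂ N₀ N p.2 * R₁ N₀ P p.1)
        + (c * (-c)) • (R₁ N₀ N p.2 * (Γ⁻¹ * N * R₂ N₀ P p.1))
        + Γ * R₁ N₀ N p.2 * (P * R₂ N₀ P p.1)
        + (-c) • (Γ * R₂ N₀ N p.2 * (Γ⁻¹ * N * R₁ N₀ P p.1))) * colV v
      + (c • (N * R₂ N₀ N p.2 * R₂ N₀ P p.1)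
        + (c * d) • (R₁ N₀ N p.2 * (Γ * R₁ N₀ P p.1))
        + Γ * R₁ N₀ N p.2 * R₁ N₀ P p.1
        + d • (Γ * R₂ N₀ N p.2 * (Γ * (P * R₂ N₀ P p.1)))) * colV w = 0 := by
      rw [hMv, hMw, Matrix.zero_mul, Matrix.zero_mul, add_zero]
    rw [← final]
    simp only [hUdef, hVdef, Matrix.mul_add, Matrix.add_mul, smul_add,
      Matrix.mul_smul, Matrix.smul_mul, smul_smul, Matrix.mul_assoc]
    module
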